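/- arXiv:2011.12983 — 7 statements merged into one kernel-verified Lean document; each statement's English description precedes it below -/
import Mathlib

section
/- Consider minority-regime dynamics with skew λ ≠ 1 on a graph G containing a (1,k)-blocking star with k ≤ ⌊λ^{2i*-1}⌋, where i* is such that λ^{2i*-1} = max{λ, λ^{-1}}. Suppose at some time t the blocking leaf v₁ plays strategy i* and the centre v plays strategy 1-i*. Then for all times t' ≥ t, v₁ plays i* and v plays 1-i*. -/
open Finset

variable {V : Type*} [Fintype V] [DecidableEq V]

/-- Number of neighbours of `v` playing strategy `j` under configuration `S`
(`false` = strategy 0, `true` = strategy 1). -/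
def nbc (G : SimpleGraph V) [DecidableRel G.Adj] (S : V → Bool) (j : Bool) (v : V) : ℕ :=
  ((G.neighborFinset v).filter fun u => S u = j).card

/-- Best-response step for payoff matrix `q` (rows/columns: `false` = 0, `true` = 1):
a vertex switches strategy iff its alternative payoff strictly exceeds its total payoff. -/
noncomputable def brStep (q : Bool → Bool → ℝ) (G : SimpleGraph V) [DecidableRel G.Adj]
    (S : V → Bool) : V → Bool := fun v =>
  if (nbc G S false v : ℝ) * q (S v) false + (nbc G S true v : ℝ) * q (S v) true <
      (nbc G S false v : ℝ) * q (!(S v)) false + (nbc G S true v : ℝ) * q (!(S v)) true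
  then !(S v) else S v

/-- `lamPow lam i` is `lam ^ (1 - 2 i)` for `i ∈ {0,1}` (`false` = 0, `true` = 1). -/
noncomputable def lamPow (lam : ℝ) (i : Bool) : ℝ := if i then lam⁻¹ else lam

/-- Majority-regime step with skew `lam`: a vertex playing `i` switches iff
`n(v;i) < lam^(1-2i) * n(v;1-i)`. -/
noncomputable def majStep (lam : ℝ) (G : SimpleGraph V) [DecidableRel G.Adj]
    (S : V → Bool) : V → Bool := fun v =>
  if (nbc G S (S v) v : ℝ) < lamPow lam (S v) * (nbc G S (!(S v)) v : ℝ) then !(S v) else S v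

/-- Minority-regime step with skew `lam`: a vertex playing `i` switches iff
`n(v;i) > lam^(1-2i) * n(v;1-i)`. -/
noncomputable def minStep (lam : ℝ) (G : SimpleGraph V) [DecidableRel G.Adj]
    (S : V → Bool) : V → Bool := fun v =>
  if lamPow lam (S v) * (nbc G S (!(S v)) v : ℝ) < (nbc G S (S v) v : ℝ) then !(S v) else S v

/-- Majority dynamics step: adopt the state of the majority of the neighbourhood,
keeping the current state in case of a tie. -/
def majDyn (G : SimpleGraph V) [DecidableRel G.Adj] (S : V → Bool) : V → Bool := fun v =>
  if nbc G S false v < nbc G S true v then true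
  else if nbc G S true v < nbc G S false v then false
  else S v

/-- Minority dynamics step: adopt the state of the minority of the neighbourhood,
keeping the current state in case of a tie. -/
def minDyn (G : SimpleGraph V) [DecidableRel G.Adj] (S : V → Bool) : V → Bool := fun v =>
  if nbc G S false v < nbc G S true v then false
  else if nbc G S true v < nbc G S false v then true
  else S v

/-- minority regime, `(1,k)`-blocking star with `k ≤ ⌊λ^(2 i* - 1)⌋`:
once the blocking leaf plays `i*` and the centre plays `1 - i*`, this persists forever. -/
theorem stmt4 (lam : ℝ) (hpos : 0 < lam) (hne : lam ≠ 1) (istar : Bool)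
    (hi : lamPow lam (!istar) = max lam lam⁻¹)
    (G : SimpleGraph V) [DecidableRel G.Adj] (k : ℕ)
    (hk : k ≤ Nat.floor (max lam lam⁻¹))
    (v v₁ : V) (hadj : G.Adj v v₁) (hdeg1 : G.degree v₁ = 1) (hdegv : G.degree v = 1 + k)
    (S : ℕ → V → Bool) (hS : ∀ t, S (t + 1) = minStep lam G (S t))
    (t : ℕ) (h1 : S t v₁ = istar) (hc : S t v = !istar) :
    ∀ t' ≥ t, S t' v₁ = istar ∧ S t' v = !istar := by
  have hM : (0:ℝ) < max lam lam⁻¹ := lt_max_of_lt_left hpos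
  have key : ∀ T : V → Bool, T v₁ = istar → T v = !istar →
      minStep lam G T v₁ = istar ∧ minStep lam G T v = !istar := by
    intro T h1 hc
    have hpow : ∀ i : Bool, 0 < lamPow lam i := by
      intro i; cases i <;> simp [lamPow, hpos, inv_pos.mpr hpos]
    constructor
    · -- leaf
      have hmem : v ∈ G.neighborFinset v₁ := by
        rw [SimpleGraph.mem_neighborFinset]; exact hadj.symm
      have hnb : G.neighborFinset v₁ = {v} := by
        apply Finset.eq_singleton_iff_unique_mem.mpr
        refine ⟨hmem, fun u hu => ?_⟩
        have hcard : (G.neighborFinset v₁).card = 1 := by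
          rw [← SimpleGraph.card_neighborFinset_eq_degree] at hdeg1; exact hdeg1
        obtain ⟨w, hw⟩ := Finset.card_eq_one.mp hcard
        rw [hw] at hu hmem
        simp only [Finset.mem_singleton] at hu hmem; rw [hu, hmem]
      have hzero : nbc G T (T v₁) v₁ = 0 := by
        rw [nbc, hnb, h1, Finset.filter_singleton, if_neg (by simp [hc]), Finset.card_empty]
      rw [minStep]
      simp only [hzero, Nat.cast_zero]
      rw [if_neg, h1]
      push_neg
      exact mul_nonneg (hpow _).le (Nat.cast_nonneg _)
    · -- centre
      rw [minStep]
      rw [if_neg, hc]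
      push_neg
      rw [hc, Bool.not_not, hi]
      have hge1 : 1 ≤ nbc G T istar v := by
        apply Finset.card_pos.mpr
        exact ⟨v₁, Finset.mem_filter.mpr ⟨(SimpleGraph.mem_neighborFinset ..).mpr hadj, h1⟩⟩
      have hle : nbc G T (!istar) v ≤ k := by
        have hsum : nbc G T istar v + nbc G T (!istar) v = G.degree v := by
          have hfn : Finset.filter (fun u => T u = !istar) (G.neighborFinset v)
              = Finset.filter (fun u => ¬ (T u = istar)) (G.neighborFinset v) :=
            Finset.filter_congr (fun u _ => by cases istar <;> cases T u <;> simp)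
          rw [nbc, nbc, hfn, Finset.card_filter_add_card_filter_not,
            ← SimpleGraph.card_neighborFinset_eq_degree]
        omega
      calc ((nbc G T (!istar) v : ℕ) : ℝ) ≤ (k : ℝ) := by exact_mod_cast hle
        _ ≤ (Nat.floor (max lam lam⁻¹) : ℝ) := by exact_mod_cast hk
        _ ≤ max lam lam⁻¹ := Nat.floor_le hM.le
        _ ≤ max lam lam⁻¹ * (nbc G T istar v : ℝ) := by
            nlinarith [(Nat.one_le_cast (α := ℝ)).mpr hge1]
  intro t' ht'
  induction t', ht' using Nat.le_induction with
  | base => exact ⟨h1, hc⟩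
  | succ n hn ih =>
      rw [hS n]
      exact key (S n) ih.1 ih.2
end

section
/- Consider minority-regime dynamics with skew λ ≠ 1 on a graph G containing a (1,k)-blocking star with k > ⌊λ^{2i*-1}⌋, where i* satisfies λ^{2i*-1} = max{λ, λ^{-1}}. Suppose from time t onward the k connectors u_1, ..., u_k all simultaneously alternate between strategies 1-i* and i* (i.e., at each step they all play the same strategy, and it alternates). Then the centre v and the blocking leaf v₁ eventually synchronise with the connectors: there exists T such that for all t' ≥ T, S_{t'}(v) = S_{t'}(v₁) = S_{t'}(u_1). -/
open Finset

variable {V : Type*} [Fintype V] [DecidableEq V]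

/-- minority regime, `(1,k)`-blocking star with `k > ⌊λ^(2 i* - 1)⌋`:
if from time `t` on the `k` connectors all simultaneously alternate between the two
strategies, then the centre and the blocking leaf eventually synchronise with them. -/
theorem stmt5 (lam : ℝ) (hpos : 0 < lam) (hne : lam ≠ 1) (istar : Bool)
    (hi : lamPow lam (!istar) = max lam lam⁻¹)
    (G : SimpleGraph V) [DecidableRel G.Adj] (k : ℕ)
    (hk : Nat.floor (max lam lam⁻¹) < k)
    (v v₁ : V) (u : Fin k → V) (hu : Function.Injective u)
    (hadj1 : G.Adj v v₁) (hdeg1 : G.degree v₁ = 1)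
    (hadju : ∀ j, G.Adj v (u j)) (huv : ∀ j, u j ≠ v₁)
    (hdegv : G.degree v = 1 + k)
    (S : ℕ → V → Bool) (hS : ∀ t, S (t + 1) = minStep lam G (S t))
    (t : ℕ)
    (hsync : ∀ t' ≥ t, ∀ j j', S t' (u j) = S t' (u j'))
    (halt : ∀ t' ≥ t, ∀ j, S (t' + 1) (u j) = !(S t' (u j))) :
    ∃ T, ∀ t' ≥ T, S t' v = S t' v₁ ∧ ∀ j, S t' (u j) = S t' v := by
  classical
  have hk1 : 1 ≤ k := by omega
  have hmax : (max lam lam⁻¹ : ℝ) < (k : ℝ) := Nat.lt_of_floor_lt hk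
  have hlp_pos : ∀ b, 0 < lamPow lam b := by
    intro b; cases b <;> simp [lamPow, hpos, inv_pos]
  have hlp_le : ∀ b, lamPow lam b ≤ max lam lam⁻¹ := by
    intro b; cases b <;> simp [lamPow, le_max_left, le_max_right]
  have hlp_inv : ∀ b, lamPow lam b * lamPow lam (!b) = 1 := by
    intro b
    cases b <;>
      simp [lamPow, mul_inv_cancel₀ (ne_of_gt hpos), inv_mul_cancel₀ (ne_of_gt hpos)]
  set j0 : Fin k := ⟨0, by omega⟩ with hj0
  have hnotmem : v₁ ∉ Finset.image u Finset.univ := by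
    simp only [Finset.mem_image]
    rintro ⟨j, -, hj⟩
    exact huv j hj
  -- neighbourhood of v₁ is {v}
  have hB : G.neighborFinset v₁ = {v} := by
    have hsub : ({v} : Finset V) ⊆ G.neighborFinset v₁ := by
      intro x hx
      simp only [Finset.mem_singleton] at hx
      subst hx
      simp [SimpleGraph.mem_neighborFinset, hadj1.symm]
    refine (Finset.eq_of_subset_of_card_le hsub ?_).symm
    rw [← SimpleGraph.card_neighborFinset_eq_degree] at hdeg1
    simp [hdeg1]
  -- neighbourhood of v
  have hA : G.neighborFinset v = insert v₁ (Finset.image u Finset.univ) := by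
    have hsub : insert v₁ (Finset.image u Finset.univ) ⊆ G.neighborFinset v := by
      intro x hx
      simp only [Finset.mem_insert, Finset.mem_image] at hx
      rcases hx with rfl | ⟨j, -, rfl⟩
      · simp [SimpleGraph.mem_neighborFinset, hadj1]
      · simp [SimpleGraph.mem_neighborFinset, hadju j]
    refine (Finset.eq_of_subset_of_card_le hsub ?_).symm
    rw [← SimpleGraph.card_neighborFinset_eq_degree] at hdegv
    rw [hdegv, Finset.card_insert_of_notMem hnotmem,
      Finset.card_image_of_injective _ hu, Finset.card_univ, Fintype.card_fin]
    omega
  -- nbc at v₁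
  have hnbc1 : ∀ S' j, nbc G S' j v₁ = if S' v = j then 1 else 0 := by
    intro S' j
    rw [nbc, hB, Finset.filter_singleton]
    split <;> simp
  -- v₁ always flips to the negation of v's current strategy
  have hv1 : ∀ t', S (t' + 1) v₁ = !(S t' v) := by
    intro t'
    rw [hS]
    simp only [minStep, hnbc1]
    have h0 : 0 < lamPow lam (S t' v₁) := hlp_pos _
    by_cases h : S t' v = S t' v₁
    · have h2 : S t' v ≠ !(S t' v₁) := by rw [h]; simp
      rw [if_pos h, if_neg h2]
      rw [if_pos (by push_cast; nlinarith)]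
      rw [h]
    · have h2 : S t' v = !(S t' v₁) := by
        revert h; cases S t' v <;> cases S t' v₁ <;> simp
      rw [if_neg h, if_pos h2]
      rw [if_neg (by push_cast; nlinarith)]
      revert h; cases S t' v <;> cases S t' v₁ <;> simp
  -- nbc at v, for times ≥ t
  have hnbcv : ∀ t' ≥ t, ∀ j, nbc G (S t') j v =
      (if S t' v₁ = j then 1 else 0) + (if S t' (u j0) = j then k else 0) := by
    intro t' ht' j
    rw [nbc, hA, Finset.filter_insert]
    have himg : (Finset.image u Finset.univ).filter (fun x => S t' x = j) =
        if S t' (u j0) = j then Finset.image u Finset.univ else ∅ := by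
      split
      · rename_i h
        rw [Finset.filter_eq_self]
        intro x hx
        simp only [Finset.mem_image] at hx
        obtain ⟨i, -, rfl⟩ := hx
        rw [hsync t' ht' i j0, h]
      · rename_i h
        rw [Finset.filter_eq_empty_iff]
        intro x hx
        simp only [Finset.mem_image] at hx
        obtain ⟨i, -, rfl⟩ := hx
        rw [hsync t' ht' i j0]
        exact h
    have hcardT : ((Finset.image u Finset.univ).filter (fun x => S t' x = j)).card =
        if S t' (u j0) = j then k else 0 := by
      rw [himg]; split <;>
        simp [Finset.card_image_of_injective _ hu]
    split
    · rw [Finset.card_insert_of_notMem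
        (fun hmem => hnotmem (Finset.mem_of_mem_filter _ hmem)), hcardT]
      split <;> omega
    · rw [hcardT]
      split <;> omega
  -- if v agrees with connectors at t' ≥ t, it still agrees at t'+1
  have hagree_step : ∀ t' ≥ t, S t' v = S t' (u j0) → S (t' + 1) v = S (t' + 1) (u j0) := by
    intro t' ht' h
    rw [halt t' ht' j0, ← h, hS]
    simp only [minStep]
    rw [if_pos]
    have h1 := hnbcv t' ht' (S t' v)
    have h2 := hnbcv t' ht' (!(S t' v))
    have e1 : (if S t' (u j0) = S t' v then k else 0) = k := by rw [if_pos h.symm]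
    have e2 : (if S t' (u j0) = !(S t' v) then k else 0) = 0 := by
      rw [if_neg]; rw [← h]; simp
    rw [e1] at h1; rw [e2] at h2
    have hb1 : (nbc G (S t') (!(S t' v)) v : ℝ) ≤ 1 := by
      have hn : nbc G (S t') (!(S t' v)) v ≤ 1 := by rw [h2]; split <;> omega
      exact_mod_cast hn
    have hb2 : (k : ℝ) ≤ (nbc G (S t') (S t' v) v : ℝ) := by
      have hn : k ≤ nbc G (S t') (S t' v) v := by rw [h1]; split <;> omega
      exact_mod_cast hn
    calc lamPow lam (S t' v) * (nbc G (S t') (!(S t' v)) v : ℝ)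
        ≤ lamPow lam (S t' v) * 1 :=
          mul_le_mul_of_nonneg_left hb1 (le_of_lt (hlp_pos _))
      _ ≤ max lam lam⁻¹ := by rw [mul_one]; exact hlp_le _
      _ < (k : ℝ) := hmax
      _ ≤ _ := hb2
  -- some time t0 ≥ t at which v agrees with the connectors
  have hreach : ∃ t0, t ≤ t0 ∧ S t0 v = S t0 (u j0) := by
    by_cases h0 : S t v = S t (u j0)
    · exact ⟨t, le_refl t, h0⟩
    · have h0' : S t (u j0) = !(S t v) := by
        revert h0; cases S t v <;> cases S t (u j0) <;> simp
      by_cases h1 : S (t + 1) v = S t v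
      · refine ⟨t + 1, by omega, ?_⟩
        rw [h1, halt t le_rfl j0, h0', Bool.not_not]
      · -- v switched at time t; show it cannot switch at time t+1
        have hcond : lamPow lam (S t v) * (nbc G (S t) (!(S t v)) v : ℝ) <
            (nbc G (S t) (S t v) v : ℝ) := by
          by_contra hc
          apply h1
          rw [hS]
          simp only [minStep]
          rw [if_neg hc]
        have hflip : S (t + 1) v = !(S t v) := by
          rw [hS]
          simp only [minStep]
          rw [if_pos hcond]
        have hn1 := hnbcv t le_rfl (S t v)
        have hn2 := hnbcv t le_rfl (!(S t v))
        have e1 : (if S t (u j0) = S t v then k else 0) = 0 := by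
          rw [if_neg]; rw [h0']; simp
        have e2 : (if S t (u j0) = !(S t v) then k else 0) = k := by
          rw [if_pos h0']
        rw [e1] at hn1; rw [e2] at hn2
        have hb1 : (nbc G (S t) (S t v) v : ℝ) ≤ 1 := by
          have hn : nbc G (S t) (S t v) v ≤ 1 := by rw [hn1]; split <;> omega
          exact_mod_cast hn
        have hb2 : (k : ℝ) ≤ (nbc G (S t) (!(S t v)) v : ℝ) := by
          have hn : k ≤ nbc G (S t) (!(S t v)) v := by rw [hn2]; split <;> omega
          exact_mod_cast hn
        have hsmall : lamPow lam (S t v) * (k : ℝ) < 1 := by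
          calc lamPow lam (S t v) * (k : ℝ)
              ≤ lamPow lam (S t v) * (nbc G (S t) (!(S t v)) v : ℝ) :=
                mul_le_mul_of_nonneg_left hb2 (le_of_lt (hlp_pos _))
            _ < (nbc G (S t) (S t v) v : ℝ) := hcond
            _ ≤ 1 := hb1
        refine ⟨t + 2, by omega, ?_⟩
        have ha1 : S (t + 1) (u j0) = S t v := by
          rw [halt t le_rfl j0, h0', Bool.not_not]
        have hb1' : S (t + 1) v₁ = !(S t v) := hv1 t
        have hn1' := hnbcv (t + 1) (by omega) (S t v)
        have hn2' := hnbcv (t + 1) (by omega) (!(S t v))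
        rw [ha1, hb1'] at hn1' hn2'
        rw [if_neg (by simp), if_pos rfl] at hn1'
        rw [if_pos rfl, if_neg (by simp)] at hn2'
        have hp1 := hlp_pos (S t v)
        have hp2 := hlp_pos (!(S t v))
        have hinv := hlp_inv (S t v)
        have hk' : (1 : ℝ) ≤ (k : ℝ) := by exact_mod_cast hk1
        have hbk : (k : ℝ) < lamPow lam (!(S t v)) := by
          nlinarith [mul_lt_mul_of_pos_left hsmall hp2]
        have hnoswitch : S (t + 2) v = S (t + 1) v := by
          rw [show t + 2 = (t + 1) + 1 from rfl, hS]
          simp only [minStep]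
          rw [if_neg]
          push_neg
          rw [hflip, Bool.not_not, hn1', hn2']
          push_cast
          nlinarith
        rw [hnoswitch, hflip, halt (t + 1) (by omega) j0, ha1]
  obtain ⟨t0, ht0, hag⟩ := hreach
  have hall : ∀ t' ≥ t0, S t' v = S t' (u j0) := by
    intro t' ht'
    induction t', ht' using Nat.le_induction with
    | base => exact hag
    | succ n hn ih => exact hagree_step n (le_trans ht0 hn) ih
  refine ⟨t0 + 1, ?_⟩
  intro t' ht'
  obtain ⟨s, rfl⟩ : ∃ s, t' = s + 1 := ⟨t' - 1, by omega⟩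
  have hs : t0 ≤ s := by omega
  have hvu : S (s + 1) v = S (s + 1) (u j0) := hall (s + 1) (by omega)
  have hv1' : S (s + 1) v₁ = !(S s v) := hv1 s
  have hvs : S s v = S s (u j0) := hall s hs
  have halts : S (s + 1) (u j0) = !(S s (u j0)) := halt s (le_trans ht0 hs) j0
  refine ⟨?_, fun j => by rw [hsync (s + 1) (le_trans ht0 (by omega)) j j0, hvu]⟩
  rw [hvu, hv1', halts, hvs]
end

section
/- Consider majority-regime dynamics with skew λ ≠ 1 on a graph G containing an (ℓ,1)-blocking star with ℓ ≥ ⌈λ^{2i*-1}⌉, where i* satisfies λ^{2i*-1} = max{λ, λ^{-1}}. If at some time t the centre and all ℓ blocking leaves play strategy 1-i*, then they play 1-i* at all subsequent times. -/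
open Finset

variable {V : Type*} [Fintype V] [DecidableEq V]

lemma stmt6_step {V : Type*} [Fintype V] [DecidableEq V]
    (lam : ℝ) (hpos : 0 < lam) (istar : Bool)
    (hi : lamPow lam (!istar) = max lam lam⁻¹)
    (G : SimpleGraph V) [DecidableRel G.Adj] (ℓ : ℕ)
    (hl : Nat.ceil (max lam lam⁻¹) ≤ ℓ)
    (v : V) (w : Fin ℓ → V) (hw : Function.Injective w)
    (hadjw : ∀ j, G.Adj v (w j)) (hdegw : ∀ j, G.degree (w j) = 1)
    (hdegv : G.degree v = ℓ + 1)
    (S : V → Bool) (hv : S v = !istar) (hleaf : ∀ j, S (w j) = !istar) :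
    majStep lam G S v = !istar ∧ ∀ j, majStep lam G S (w j) = !istar := by
  have hM0 : (0:ℝ) ≤ max lam lam⁻¹ := le_trans hpos.le (le_max_left _ _)
  have hMl : max lam lam⁻¹ ≤ (ℓ:ℝ) := le_trans (Nat.le_ceil _) (by exact_mod_cast hl)
  constructor
  · -- centre
    have hsub : Finset.image w Finset.univ ⊆
        (G.neighborFinset v).filter (fun u => S u = !istar) := by
      intro x hx
      simp only [Finset.mem_image] at hx
      obtain ⟨j, _, rfl⟩ := hx
      simp [SimpleGraph.mem_neighborFinset, hadjw j, hleaf j]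
    have hsame : ℓ ≤ nbc G S (!istar) v := by
      have := Finset.card_le_card hsub
      rwa [Finset.card_image_of_injective _ hw, Finset.card_univ, Fintype.card_fin] at this
    have hbool : ∀ b : Bool, (¬ b = !istar) ↔ b = istar := by
      intro b; cases b <;> cases istar <;> simp
    have hsplit : nbc G S (!istar) v + nbc G S istar v = ℓ + 1 := by
      have h := Finset.card_filter_add_card_filter_not
        (s := G.neighborFinset v) (p := fun u => S u = !istar)
      unfold nbc
      rw [← hdegv, SimpleGraph.degree, ← h]
      congr 1
      apply Finset.card_bij (fun a _ => a) <;> intro a <;> simp [hbool]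
    have hopp : nbc G S istar v ≤ 1 := by omega
    unfold majStep
    rw [hv]
    simp only [Bool.not_not]
    rw [if_neg]
    push_neg
    rw [hi]
    calc max lam lam⁻¹ * (nbc G S istar v : ℝ)
        ≤ max lam lam⁻¹ * 1 := by
          apply mul_le_mul_of_nonneg_left _ hM0
          exact_mod_cast hopp
      _ ≤ (ℓ : ℝ) := by rwa [mul_one]
      _ ≤ (nbc G S (!istar) v : ℝ) := by exact_mod_cast hsame
  · -- leaves
    intro j
    have hnb : G.neighborFinset (w j) = {v} := by
      symm
      apply Finset.eq_of_subset_of_card_le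
      · intro x hx
        simp only [Finset.mem_singleton] at hx
        subst hx
        simp [SimpleGraph.mem_neighborFinset, (hadjw j).symm]
      · rw [← SimpleGraph.degree, hdegw j, Finset.card_singleton]
    have h1 : nbc G S (!istar) (w j) = 1 := by
      unfold nbc; rw [hnb, Finset.filter_singleton, if_pos hv, Finset.card_singleton]
    have h2 : nbc G S istar (w j) = 0 := by
      unfold nbc; rw [hnb]
      simp only [Finset.filter_singleton, hv]
      cases istar <;> simp_all
    unfold majStep
    rw [hleaf j]
    simp only [Bool.not_not]
    rw [if_neg]
    push_neg
    rw [h1, h2, hi]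
    simp [hM0]

/-- majority regime, `(ℓ,1)`-blocking star with `ℓ ≥ ⌈λ^(2 i* - 1)⌉`:
if at some time the centre and all `ℓ` blocking leaves play `1 - i*`, they do so forever. -/
theorem stmt6 (lam : ℝ) (hpos : 0 < lam) (hne : lam ≠ 1) (istar : Bool)
    (hi : lamPow lam (!istar) = max lam lam⁻¹)
    (G : SimpleGraph V) [DecidableRel G.Adj] (ℓ : ℕ)
    (hl : Nat.ceil (max lam lam⁻¹) ≤ ℓ)
    (v u₀ : V) (w : Fin ℓ → V) (hw : Function.Injective w)
    (hadjw : ∀ j, G.Adj v (w j)) (hdegw : ∀ j, G.degree (w j) = 1)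
    (hadj0 : G.Adj v u₀) (hw0 : ∀ j, w j ≠ u₀)
    (hdegv : G.degree v = ℓ + 1)
    (S : ℕ → V → Bool) (hS : ∀ t, S (t + 1) = majStep lam G (S t))
    (t : ℕ) (hv : S t v = !istar) (hleaf : ∀ j, S t (w j) = !istar) :
    ∀ t' ≥ t, S t' v = !istar ∧ ∀ j, S t' (w j) = !istar := by
  intro t' ht'
  induction t', ht' using Nat.le_induction with
  | base => exact ⟨hv, hleaf⟩
  | succ n hn ih =>
    obtain ⟨h1, h2⟩ := ih
    rw [hS n]
    exact stmt6_step lam hpos istar hi G ℓ hl v w hw hadjw hdegw hdegv (S n) h1 h2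
end

section
/- Consider majority-regime dynamics with skew λ ≠ 1 on a graph G containing an (ℓ,1)-blocking star with ℓ ≥ 1, where i* satisfies λ^{2i*-1} = max{λ, λ^{-1}} (equivalently λ^{1-2i*} < 1). If at some time t the centre and all ℓ blocking leaves play strategy i*, then they play i* at all subsequent times. -/
open Finset

variable {V : Type*} [Fintype V] [DecidableEq V]

/-- majority regime, `(ℓ,1)`-blocking star with `ℓ ≥ 1`:
if at some time the centre and all `ℓ` blocking leaves play `i*`, they do so forever. -/
theorem stmt7 (lam : ℝ) (hpos : 0 < lam) (hne : lam ≠ 1) (istar : Bool)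
    (hi : lamPow lam (!istar) = max lam lam⁻¹)
    (G : SimpleGraph V) [DecidableRel G.Adj] (ℓ : ℕ) (hl : 1 ≤ ℓ)
    (v u₀ : V) (w : Fin ℓ → V) (hw : Function.Injective w)
    (hadjw : ∀ j, G.Adj v (w j)) (hdegw : ∀ j, G.degree (w j) = 1)
    (hadj0 : G.Adj v u₀) (hw0 : ∀ j, w j ≠ u₀)
    (hdegv : G.degree v = ℓ + 1)
    (S : ℕ → V → Bool) (hS : ∀ t, S (t + 1) = majStep lam G (S t))
    (t : ℕ) (hv : S t v = istar) (hleaf : ∀ j, S t (w j) = istar) :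
    ∀ t' ≥ t, S t' v = istar ∧ ∀ j, S t' (w j) = istar := by
  have hlp : lamPow lam istar < 1 := by
    cases istar
    · rw [show lamPow lam (!false) = lam⁻¹ from by simp [lamPow]] at hi
      have h1 : lam ≤ lam⁻¹ := le_trans (le_max_left lam lam⁻¹) hi.symm.le
      have h2 : lam * lam⁻¹ = 1 := mul_inv_cancel₀ (ne_of_gt hpos)
      show (if (false : Bool) = true then lam⁻¹ else lam) < 1
      rw [if_neg (by simp)]
      rcases lt_or_gt_of_ne hne with h | h
      · exact h
      · nlinarith
    · rw [show lamPow lam (!true) = lam from by simp [lamPow]] at hi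
      have h1 : lam⁻¹ ≤ lam := le_trans (le_max_right lam lam⁻¹) hi.symm.le
      have h2 : lam * lam⁻¹ = 1 := mul_inv_cancel₀ (ne_of_gt hpos)
      rw [show lamPow lam true = lam⁻¹ from by simp [lamPow]]
      rcases lt_or_gt_of_ne hne with h | h
      · nlinarith
      · nlinarith [inv_pos.2 hpos]
  have hlp0 : 0 < lamPow lam istar := by
    cases istar <;> simp [lamPow, inv_pos, hpos]
  have hnfw : ∀ j, G.neighborFinset (w j) = {v} := by
    intro j
    refine (Finset.eq_of_subset_of_card_le
      (Finset.singleton_subset_iff.2 ((G.mem_neighborFinset _ _).2 (hadjw j).symm)) ?_).symm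
    rw [G.card_neighborFinset_eq_degree, hdegw j, Finset.card_singleton]
  have key : ∀ s, S s v = istar → (∀ j, S s (w j) = istar) →
      S (s + 1) v = istar ∧ ∀ j, S (s + 1) (w j) = istar := by
    intro s hv' hleaf'
    have hsub : (Finset.univ.image w) ⊆
        (G.neighborFinset v).filter (fun u => S s u = istar) := by
      intro x hx
      simp only [Finset.mem_image, Finset.mem_univ, true_and] at hx
      obtain ⟨j, rfl⟩ := hx
      simp [SimpleGraph.mem_neighborFinset, hadjw j, hleaf' j]
    have hA : ℓ ≤ nbc G (S s) istar v := by
      have := Finset.card_le_card hsub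
      rwa [Finset.card_image_of_injective _ hw, Finset.card_univ, Fintype.card_fin] at this
    have hB : nbc G (S s) (!istar) v ≤ 1 := by
      have hdisj : Disjoint ((G.neighborFinset v).filter (fun u => S s u = !istar))
          (Finset.univ.image w) := by
        rw [Finset.disjoint_right]
        intro x hx
        simp only [Finset.mem_image, Finset.mem_univ, true_and] at hx
        obtain ⟨j, rfl⟩ := hx
        simp [Finset.mem_filter, hleaf' j]
      have hsub2 : ((G.neighborFinset v).filter (fun u => S s u = !istar)) ∪
          (Finset.univ.image w) ⊆ G.neighborFinset v := by
        refine Finset.union_subset (Finset.filter_subset _ _) ?_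
        intro x hx
        simp only [Finset.mem_image, Finset.mem_univ, true_and] at hx
        obtain ⟨j, rfl⟩ := hx
        simpa [SimpleGraph.mem_neighborFinset] using hadjw j
      have := Finset.card_le_card hsub2
      rw [Finset.card_union_of_disjoint hdisj, Finset.card_image_of_injective _ hw,
        Finset.card_univ, Fintype.card_fin, G.card_neighborFinset_eq_degree, hdegv] at this
      have : nbc G (S s) (!istar) v + ℓ ≤ ℓ + 1 := this
      omega
    have hcond : ¬ ((nbc G (S s) istar v : ℝ) <
        lamPow lam istar * (nbc G (S s) (!istar) v : ℝ)) := by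
      push_neg
      have hBr : (nbc G (S s) (!istar) v : ℝ) ≤ 1 := by exact_mod_cast hB
      have hAr : (1:ℝ) ≤ (nbc G (S s) istar v : ℝ) := by exact_mod_cast hl.trans hA
      nlinarith
    constructor
    · rw [hS s]
      simp only [majStep, hv']
      rw [if_neg hcond]
    · intro j
      have h1 : nbc G (S s) istar (w j) = 1 := by
        rw [nbc, hnfw j, Finset.filter_singleton, if_pos hv', Finset.card_singleton]
      have h0 : nbc G (S s) (!istar) (w j) = 0 := by
        rw [nbc, hnfw j, Finset.filter_singleton, if_neg (by simp [hv']), Finset.card_empty]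
      rw [hS s]
      simp [majStep, hleaf' j, h1, h0]
  intro t' ht'
  induction t', ht' using Nat.le_induction with
  | base => exact ⟨hv, hleaf⟩
  | succ n hn ih => exact key n ih.1 ih.2
end

section
/- Consider majority-regime dynamics with skew λ ≠ 1 on a graph G, with i* such that λ^{1-2i*} < 1, and let ℓ_λ = ⌈max{λ, λ^{-1}}⌉. Let C ≥ ℓ_λ + 4 and let H be the set of vertices of G of degree at least C. Suppose every vertex of H has at most ℓ_λ + 1 neighbours outside H. If at time t all vertices of H play strategy i*, then all vertices of H play strategy i* at time t+1 (and hence at all subsequent times). -/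
/-!
Fix a vertex `v` of `H` while all of `H` plays `i*`. Its neighbours playing `1 - i*` lie
outside `H`, so there are at most `ℓ_λ + 1` of them and, as `deg v ≥ ℓ_λ + 4`, at least `3`
neighbours play `i*`. Since `min{λ, λ⁻¹} (ℓ_λ + 1) < 3 min{λ, λ⁻¹} max{λ, λ⁻¹} = 3`, the
switching condition fails at `v`.
-/

open Finset

variable {V : Type*} [Fintype V] [DecidableEq V]

theorem min_mul_ceil_max_add_one_lt_three {lam : ℝ} (hpos : 0 < lam) (hne : lam ≠ 1) :
    min lam lam⁻¹ * (Nat.ceil (max lam lam⁻¹) + 1) < 3 := by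
  set M := max lam lam⁻¹
  have hM : 1 < M := by
    rcases hne.lt_or_gt with h | h
    · exact lt_max_of_lt_right (one_lt_inv₀ hpos |>.mpr h)
    · exact lt_max_of_lt_left h
  have hmM : min lam lam⁻¹ * M = 1 := by rw [min_mul_max, mul_inv_cancel₀ hpos.ne']
  -- `⌈M⌉ + 1 < M + 2 < 3 M` because `M > 1`
  calc min lam lam⁻¹ * (Nat.ceil M + 1)
      < min lam lam⁻¹ * (3 * M) := by
        gcongr
        linarith [Nat.ceil_lt_add_one (zero_le_one.trans hM.le)]
    _ = 3 := by linear_combination 3 * hmM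

section Stability

omit [DecidableEq V]

variable (G : SimpleGraph V) [DecidableRel G.Adj]

theorem nbc_add_nbc_not (S : V → Bool) (i : Bool) (v : V) :
    nbc G S i v + nbc G S (!i) v = G.degree v := by
  rw [← G.card_neighborFinset_eq_degree,
    ← Finset.card_filter_add_card_filter_not (fun u => S u = i)]
  simp only [nbc, Bool.eq_not_iff]

theorem nbc_not_le_card_filter_degree_lt (S : V → Bool) (i : Bool) (C : ℕ)
    (hH : ∀ u, C ≤ G.degree u → S u = i) (v : V) :
    nbc G S (!i) v ≤ ((G.neighborFinset v).filter fun u => G.degree u < C).card := by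
  refine Finset.card_le_card fun u hu => ?_
  rw [Finset.mem_filter] at hu
  refine Finset.mem_filter.mpr ⟨hu.1, lt_of_not_ge fun hdeg => ?_⟩
  exact Bool.not_ne_self i (hH u hdeg ▸ hu.2).symm

theorem majStep_apply_of_le {lam : ℝ} {S : V → Bool} {v : V}
    (h : lamPow lam (S v) * nbc G S (!(S v)) v ≤ nbc G S (S v) v) :
    majStep lam G S v = S v :=
  if_neg (not_lt.mpr h)

variable {lam : ℝ} (hpos : 0 < lam) (hne : lam ≠ 1) {i : Bool} (hi : lamPow lam i = min lam lam⁻¹)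
  {S : V → Bool}
include hpos hne hi

theorem majStep_eq_of_nbc_not_le {v : V} (hv : S v = i)
    (hfew : nbc G S (!i) v ≤ Nat.ceil (max lam lam⁻¹) + 1) (hmany : 3 ≤ nbc G S i v) :
    majStep lam G S v = i := by
  subst hv
  refine majStep_apply_of_le G ?_
  calc lamPow lam (S v) * nbc G S (!(S v)) v
      ≤ min lam lam⁻¹ * (Nat.ceil (max lam lam⁻¹) + 1) := by
        rw [hi]
        gcongr
        exact_mod_cast hfew
    _ ≤ 3 := (min_mul_ceil_max_add_one_lt_three hpos hne).le
    _ ≤ nbc G S (S v) v := by exact_mod_cast hmany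

theorem majStep_eq_of_high_degree {C : ℕ} (hC : Nat.ceil (max lam lam⁻¹) + 4 ≤ C)
    (hout : ∀ v, C ≤ G.degree v →
      ((G.neighborFinset v).filter fun u => G.degree u < C).card ≤
        Nat.ceil (max lam lam⁻¹) + 1)
    (hH : ∀ u, C ≤ G.degree u → S u = i) {v : V} (hv : C ≤ G.degree v) :
    majStep lam G S v = i := by
  have hfew := (nbc_not_le_card_filter_degree_lt G S i C hH v).trans (hout v hv)
  have hsplit := nbc_add_nbc_not G S i v
  exact majStep_eq_of_nbc_not_le G hpos hne hi (hH v hv) hfew (by omega)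

end Stability

/-- majority regime, `ℓ_λ = ⌈max{λ, λ⁻¹}⌉`, `C ≥ ℓ_λ + 4`, and `H` the
set of vertices of degree at least `C`, each having at most `ℓ_λ + 1` neighbours outside
`H`: if all of `H` plays `i*` at time `t`, then all of `H` plays `i*` at all times `s ≥ t`. -/
theorem stmt12 (lam : ℝ) (hpos : 0 < lam) (hne : lam ≠ 1) (istar : Bool)
    (hi : lamPow lam istar = min lam lam⁻¹)
    (G : SimpleGraph V) [DecidableRel G.Adj] (C : ℕ)
    (hC : Nat.ceil (max lam lam⁻¹) + 4 ≤ C)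
    (hout : ∀ v, C ≤ G.degree v →
      ((G.neighborFinset v).filter fun u => G.degree u < C).card ≤
        Nat.ceil (max lam lam⁻¹) + 1)
    (S : ℕ → V → Bool) (hS : ∀ t, S (t + 1) = majStep lam G (S t))
    (t : ℕ) (hall : ∀ v, C ≤ G.degree v → S t v = istar) :
    ∀ s ≥ t, ∀ v, C ≤ G.degree v → S s v = istar := by
  intro s hs
  induction s, hs using Nat.le_induction with
  | base => exact hall
  | succ s _ ih =>
    intro v hv
    rw [hS s]
    exact majStep_eq_of_high_degree G hpos hne hi hC hout ih hv
end

section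
/- Consider minority-regime dynamics with skew λ ≠ 1 on a graph G and i* with λ^{1-2i*} < 1. Let v₁ v₂ be an edge of G such that both n(v₁) \ {v₂} and n(v₂) \ {v₁} are nonempty and all neighbours of v₁ other than v₂ and all neighbours of v₂ other than v₁ play strategy i* at time t, while S_t(v₁) = S_t(v₂) = 1-i*. If moreover all those outside neighbours switch to 1-i* at time t+1, then S_{t+1}(v₁) = S_{t+1}(v₂) = 1-i*, i.e., v₁ and v₂ become synchronised with their outside neighbours at time t+1. -/
open Finset

variable {V : Type*} [Fintype V] [DecidableEq V]

/-! Each endpoint plays `1 - i*` and sees at most one neighbour (the other endpoint) playing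
`1 - i*` but at least one playing `i*`. Its threshold factor is `λ^{1-2(1-i*)} = max{λ, λ⁻¹} > 1`,
so the minority switching condition `n(v; 1-i*) > max{λ, λ⁻¹} · n(v; i*)` fails and it stays. -/

theorem one_lt_lamPow_not {lam : ℝ} (hpos : 0 < lam) (hne : lam ≠ 1) {istar : Bool}
    (hi : lamPow lam istar = min lam lam⁻¹) : 1 < lamPow lam (!istar) := by
  rcases hne.lt_or_gt with hlt | hgt
  · have hinv : 1 < lam⁻¹ := (one_lt_inv₀ hpos).2 hlt
    cases istar
    · simpa [lamPow] using hinv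
    · simp only [lamPow, if_true, min_eq_left (hlt.trans hinv).le] at hi
      linarith
  · have hinv : lam⁻¹ < 1 := inv_lt_one_of_one_lt₀ hgt
    cases istar
    · simp only [lamPow, Bool.false_eq_true, if_false, min_eq_right (hinv.trans hgt).le] at hi
      linarith
    · simpa [lamPow] using hgt

section Dynamics

variable {W : Type*} [Fintype W] (G : SimpleGraph W) [DecidableRel G.Adj] (S : W → Bool)

theorem nbc_pos {j : Bool} {v u : W} (hu : u ∈ G.neighborFinset v) (hSu : S u = j) :
    0 < nbc G S j v :=
  card_pos.2 ⟨u, mem_filter.2 ⟨hu, hSu⟩⟩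

theorem nbc_le_one {j : Bool} {v w : W}
    (hout : ∀ u ∈ G.neighborFinset v, u ≠ w → S u ≠ j) : nbc G S j v ≤ 1 := by
  have hsub : (G.neighborFinset v).filter (fun u => S u = j) ⊆ {w} := by
    intro u hu
    rw [mem_filter] at hu
    by_contra hne
    exact hout u hu.1 (mem_singleton.not.1 hne) hu.2
  simpa [nbc] using card_le_card hsub

theorem minStep_eq_self {lam : ℝ} {v : W} (hlam : 1 ≤ lamPow lam (S v))
    (hsame : nbc G S (S v) v ≤ 1) (hother : 0 < nbc G S (!(S v)) v) : minStep lam G S v = S v := by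
  have hsame' : (nbc G S (S v) v : ℝ) ≤ 1 := by exact_mod_cast hsame
  have hother' : (1 : ℝ) ≤ nbc G S (!(S v)) v := by exact_mod_cast hother
  have hstay : ¬ lamPow lam (S v) * nbc G S (!(S v)) v < nbc G S (S v) v := by
    rw [not_lt]
    nlinarith
  simp only [minStep, if_neg hstay]

theorem minStep_eq_of_forall_outside_eq {lam : ℝ} {istar : Bool} (hlam : 1 < lamPow lam (!istar))
    {v w : W} (hne : ∃ u ∈ G.neighborFinset v, u ≠ w)
    (hout : ∀ u ∈ G.neighborFinset v, u ≠ w → S u = istar)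
    (hv : S v = !istar) : minStep lam G S v = !istar := by
  obtain ⟨u, hu, huw⟩ := hne
  have hsame : nbc G S (S v) v ≤ 1 :=
    nbc_le_one G S (w := w) fun x hx hxw => by simp [hout x hx hxw, hv]
  have hother : 0 < nbc G S (!(S v)) v := nbc_pos G S hu (by simp [hout u hu huw, hv])
  rw [← hv]
  exact minStep_eq_self G S (by rw [hv]; exact hlam.le) hsame hother

end Dynamics

theorem stmt14_general (lam : ℝ) (hpos : 0 < lam) (hne : lam ≠ 1) (istar : Bool)
    (hi : lamPow lam istar = min lam lam⁻¹)
    (G : SimpleGraph V) [DecidableRel G.Adj] (v₁ v₂ : V)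
    (S : ℕ → V → Bool) (hS : ∀ t, S (t + 1) = minStep lam G (S t)) (t : ℕ)
    (hne1 : ∃ u ∈ G.neighborFinset v₁, u ≠ v₂)
    (hne2 : ∃ u ∈ G.neighborFinset v₂, u ≠ v₁)
    (hout1 : ∀ u ∈ G.neighborFinset v₁, u ≠ v₂ → S t u = istar ∧ S (t + 1) u = !istar)
    (hout2 : ∀ u ∈ G.neighborFinset v₂, u ≠ v₁ → S t u = istar ∧ S (t + 1) u = !istar)
    (h1 : S t v₁ = !istar) (h2 : S t v₂ = !istar) :
    S (t + 1) v₁ = !istar ∧ S (t + 1) v₂ = !istar := by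
  have hlam := one_lt_lamPow_not hpos hne hi
  rw [hS t]
  exact ⟨minStep_eq_of_forall_outside_eq G (S t) hlam hne1 (fun u hu h => (hout1 u hu h).1) h1,
    minStep_eq_of_forall_outside_eq G (S t) hlam hne2 (fun u hu h => (hout2 u hu h).1) h2⟩

/-- minority regime: an edge `v₁v₂` whose endpoints both play `1 - i*` at
time `t`, while all their (existing) outside neighbours play `i*` at time `t` and switch
to `1 - i*` at time `t + 1`, has both endpoints playing `1 - i*` at time `t + 1`, i.e.
synchronised with their outside neighbours. -/
theorem stmt14 (lam : ℝ) (hpos : 0 < lam) (hne : lam ≠ 1) (istar : Bool)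
    (hi : lamPow lam istar = min lam lam⁻¹)
    (G : SimpleGraph V) [DecidableRel G.Adj] (v₁ v₂ : V) (hadj : G.Adj v₁ v₂)
    (S : ℕ → V → Bool) (hS : ∀ t, S (t + 1) = minStep lam G (S t)) (t : ℕ)
    (hne1 : ∃ u ∈ G.neighborFinset v₁, u ≠ v₂)
    (hne2 : ∃ u ∈ G.neighborFinset v₂, u ≠ v₁)
    (hout1 : ∀ u ∈ G.neighborFinset v₁, u ≠ v₂ → S t u = istar ∧ S (t + 1) u = !istar)
    (hout2 : ∀ u ∈ G.neighborFinset v₂, u ≠ v₁ → S t u = istar ∧ S (t + 1) u = !istar)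
    (h1 : S t v₁ = !istar) (h2 : S t v₂ = !istar) :
    S (t + 1) v₁ = !istar ∧ S (t + 1) v₂ = !istar :=
  stmt14_general lam hpos hne istar hi G v₁ v₂ S hS t hne1 hne2 hout1 hout2 h1 h2
end

section
/- Let n, ℓ, k ∈ ℕ and p = d/n with 1 ≪ d = O(log n). The expected number of (ℓ,k)-blocking stars in G(n,p) satisfies E[X_{ℓ,k,n}] ∼ n · d^{ℓ+k}/(ℓ! k!) · e^{-d(ℓ+1)} as n → ∞. -/
/-!
Fix a configuration `(v, L, K)` of the right sizes. It is a blocking star exactly when the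
`ℓ + k` edges from `v` to `L ∪ K` are present and every other edge at `v` or at a vertex of `L`
is absent; there are between `(ℓ + 1) n - O(1)` and `(ℓ + 1) n` such forbidden edges. Hence
`E[X] = N p^(ℓ+k) (1-p)^((ℓ+1) n + O(1))` where `N = n (n-1 choose ℓ) (n-1-ℓ choose k)` is
asymptotic to `n^(ℓ+k+1) / (ℓ! k!)`. Finally `(1 - p)^n ~ e^(-d)`, because
`1 - n x² ≤ ((1 - x) e^x)^n ≤ 1` for `0 ≤ x ≤ 1`, and `n p² = d² / n → 0` when `d = O(log n)`.
-/

open MeasureTheory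

/-- The binomial random graph `G(n,p)`, modelled as the product of Bernoulli(`p`)
measures over potential-edge indicators indexed by `Sym2 (Fin n)` (the diagonal
coordinates are irrelevant to the resulting graph). -/
noncomputable def gnp (n : ℕ) (p : ℝ) : Measure (Sym2 (Fin n) → Bool) :=
  Measure.pi fun _ => (PMF.bernoulli (min (Real.toNNReal p) 1) (min_le_right _ _)).toMeasure

/-- The simple graph determined by an edge-indicator function. -/
def graphOf {n : ℕ} (ω : Sym2 (Fin n) → Bool) : SimpleGraph (Fin n) where
  Adj u v := u ≠ v ∧ ω s(u, v) = true
  symm := ⟨by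
    intro u v h
    exact ⟨h.1.symm, by rw [Sym2.eq_swap]; exact h.2⟩⟩
  loopless := ⟨fun v h => h.1 rfl⟩

instance {n : ℕ} (ω : Sym2 (Fin n) → Bool) : DecidableRel (graphOf ω).Adj :=
  fun u v => show Decidable (u ≠ v ∧ ω s(u, v) = true) from instDecidableAnd

/-- `(v, L, K)` forms an `(ℓ,k)`-blocking star in `G`: the centre `v` has degree `ℓ + k`,
the `ℓ` blocking leaves in `L` have degree 1 (their only neighbour is `v`), and the `k`
connectors in `K` are adjacent to `v` (their degrees are unrestricted). -/
def IsBStar {n : ℕ} (ℓ k : ℕ) (G : SimpleGraph (Fin n)) [DecidableRel G.Adj]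
    (v : Fin n) (L K : Finset (Fin n)) : Prop :=
  L.card = ℓ ∧ K.card = k ∧ Disjoint L K ∧ v ∉ L ∧ v ∉ K ∧
    (∀ u ∈ L, G.neighborFinset u = {v}) ∧ (∀ u ∈ K, G.Adj v u) ∧ G.degree v = ℓ + k

/-- The number of `(ℓ,k)`-blocking stars in the graph determined by `ω`. -/
noncomputable def bStarCount (ℓ k : ℕ) {n : ℕ} (ω : Sym2 (Fin n) → Bool) : ℕ := by
  classical
  exact (Finset.univ.filter fun x : Fin n × Finset (Fin n) × Finset (Fin n) =>
    IsBStar ℓ k (graphOf ω) x.1 x.2.1 x.2.2).card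

open Finset Filter Topology
open scoped Nat

section Edges
variable {α : Type*} [DecidableEq α]

def starEdges (v : α) (S : Finset α) : Finset (Sym2 α) :=
  S.image fun u => s(v, u)

lemma card_starEdges (v : α) (S : Finset α) : #(starEdges v S) = #S :=
  card_image_of_injective _ fun _ _ => Sym2.congr_right.1

lemma mk_mem_starEdges {v w : α} {S : Finset α} : s(v, w) ∈ starEdges v S ↔ w ∈ S :=
  Function.Injective.mem_finset_image fun _ _ => Sym2.congr_right.1

lemma mk_mem_starEdges_of_mem {u v w : α} {S : Finset α} (hu : u ∈ S) (huv : u ≠ v) :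
    s(u, w) ∈ starEdges v S ↔ w = v := by
  constructor
  · simp only [starEdges, mem_image, Sym2.eq_iff]
    rintro ⟨x, -, ⟨rfl, -⟩ | ⟨h, -⟩⟩
    · exact absurd rfl huv
    · exact h.symm
  · rintro rfl
    exact mem_image.2 ⟨u, hu, Sym2.eq_swap⟩

variable [Fintype α]

def incidentEdges (T : Finset α) : Finset (Sym2 α) :=
  {x ∈ T ×ˢ (univ : Finset α) | x.1 ≠ x.2}.image fun x => s(x.1, x.2)

lemma forall_mem_incidentEdges {T : Finset α} {P : Sym2 α → Prop} :
    (∀ e ∈ incidentEdges T, P e) ↔ ∀ t ∈ T, ∀ w, t ≠ w → P s(t, w) := by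
  rw [incidentEdges, forall_mem_image]
  simp only [mem_filter, mem_product, mem_univ, and_true, and_imp, Prod.forall]
  exact ⟨fun h t ht w => h t w ht, fun h t w ht => h t ht w⟩

lemma card_incidentEdges_le (T : Finset α) : #(incidentEdges T) ≤ #T * Fintype.card α :=
  card_image_le.trans <| (card_filter_le _ _).trans_eq <| by rw [card_product, card_univ]

lemma mul_card_compl_le_card_incidentEdges (T : Finset α) :
    #T * (Fintype.card α - #T) ≤ #(incidentEdges T) := by
  rw [← card_compl, ← card_product]
  refine card_le_card_of_injOn (fun x => s(x.1, x.2)) (fun x hx => ?_) ?_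
  · rw [coe_product, Set.mem_prod, mem_coe, mem_coe, mem_compl] at hx
    exact mem_image_of_mem _ (mem_filter.2 ⟨mem_product.2 ⟨hx.1, mem_univ _⟩,
      fun h : x.1 = x.2 => hx.2 (h ▸ hx.1)⟩)
  · rintro ⟨t, w⟩ hx ⟨t', w'⟩ hx' he
    simp only [coe_product, Set.mem_prod, mem_coe, mem_compl] at hx hx'
    rcases Sym2.mk_eq_mk_iff.1 he with h | h
    · exact h
    · obtain ⟨rfl, -⟩ := Prod.ext_iff.1 h
      exact absurd hx.1 hx'.2

lemma starEdges_subset_incidentEdges {v : α} {S T : Finset α} (hvS : v ∉ S) (hvT : v ∈ T) :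
    starEdges v S ⊆ incidentEdges T := by
  intro e he
  obtain ⟨u, hu, rfl⟩ := mem_image.1 he
  exact mem_image_of_mem _ (mem_filter.2 ⟨mem_product.2 ⟨hvT, mem_univ u⟩,
    fun h : v = u => hvS (h ▸ hu)⟩)

end Edges

section StarShapes
variable {n : ℕ}

def IsStarShape (ℓ k : ℕ) (v : Fin n) (L K : Finset (Fin n)) : Prop :=
  #L = ℓ ∧ #K = k ∧ Disjoint L K ∧ v ∉ L ∧ v ∉ K

instance {ℓ k : ℕ} {v : Fin n} {L K : Finset (Fin n)} : Decidable (IsStarShape ℓ k v L K) :=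
  inferInstanceAs (Decidable (_ ∧ _))

def starShapes (ℓ k n : ℕ) : Finset (Fin n × Finset (Fin n) × Finset (Fin n)) :=
  {x | IsStarShape ℓ k x.1 x.2.1 x.2.2}

lemma isStarShape_iff {ℓ k : ℕ} {v : Fin n} {L K : Finset (Fin n)} :
    IsStarShape ℓ k v L K ↔
      L ∈ powersetCard ℓ (univ.erase v) ∧ K ∈ powersetCard k (univ.erase v \ L) := by
  simp only [IsStarShape, mem_powersetCard, subset_sdiff, subset_erase, subset_univ, true_and,
    disjoint_comm (a := K)]
  tauto

lemma card_starShapes (ℓ k n : ℕ) :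
    #(starShapes ℓ k n) = n * ((n - 1).choose ℓ * (n - 1 - ℓ).choose k) := by
  have hcard (v : Fin n) : #(univ.erase v) = n - 1 := by
    rw [card_erase_of_mem (mem_univ v), card_univ, Fintype.card_fin]
  have hinner (v : Fin n) : ∀ L ∈ powersetCard ℓ (univ.erase v),
      #(powersetCard k (univ.erase v \ L)) = (n - 1 - ℓ).choose k := by
    intro L hL
    rw [mem_powersetCard] at hL
    rw [card_powersetCard, card_sdiff_of_subset hL.1, hcard, hL.2]
  rw [starShapes, card_filter, Fintype.sum_prod_type]
  simp_rw [Fintype.sum_prod_type, isStarShape_iff, ite_and, sum_ite_irrel, sum_const_zero,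
    sum_ite_mem, univ_inter, sum_const, smul_eq_mul, mul_one]
  rw [sum_congr rfl fun v _ => sum_congr rfl (hinner v)]
  simp only [sum_const, card_powersetCard, hcard, card_univ, Fintype.card_fin, smul_eq_mul]

lemma card_starShapes_mul_factorial (ℓ k n : ℕ) :
    #(starShapes ℓ k n) * (ℓ ! * k !) = n.descFactorial (ℓ + k + 1) := by
  have h := Nat.descFactorial_mul_descFactorial (n := n - 1) (Nat.le_add_right ℓ k)
  rw [Nat.add_sub_cancel_left, Nat.descFactorial_eq_factorial_mul_choose,
    Nat.descFactorial_eq_factorial_mul_choose] at h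
  rw [card_starShapes]
  cases n with
  | zero => simp
  | succ n =>
    rw [Nat.add_sub_cancel] at h
    rw [Nat.succ_descFactorial_succ, ← h, Nat.add_sub_cancel]
    ring

lemma IsBStar.isStarShape {ℓ k : ℕ} {G : SimpleGraph (Fin n)} [DecidableRel G.Adj] {v : Fin n}
    {L K : Finset (Fin n)} (h : IsBStar ℓ k G v L K) : IsStarShape ℓ k v L K :=
  ⟨h.1, h.2.1, h.2.2.1, h.2.2.2.1, h.2.2.2.2.1⟩

lemma isBStar_iff_neighborFinset {ℓ k : ℕ} {G : SimpleGraph (Fin n)} [DecidableRel G.Adj]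
    {v : Fin n} {L K : Finset (Fin n)} (h : IsStarShape ℓ k v L K) :
    IsBStar ℓ k G v L K ↔ G.neighborFinset v = L ∪ K ∧ ∀ u ∈ L, G.neighborFinset u = {v} := by
  obtain ⟨hL, hK, hLK, hvL, hvK⟩ := h
  have hcard : #(L ∪ K) = ℓ + k := by rw [card_union_of_disjoint hLK, hL, hK]
  constructor
  · rintro ⟨-, -, -, -, -, hleaf, hadj, hdeg⟩
    refine ⟨(eq_of_subset_of_card_le (fun u hu => ?_) ?_).symm, hleaf⟩
    · rw [SimpleGraph.mem_neighborFinset]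
      rcases mem_union.1 hu with hu | hu
      · exact ((G.mem_neighborFinset u v).1 (hleaf u hu ▸ mem_singleton_self v)).symm
      · exact hadj u hu
    · rw [G.card_neighborFinset_eq_degree, hdeg, hcard]
  · rintro ⟨hnbr, hleaf⟩
    refine ⟨hL, hK, hLK, hvL, hvK, hleaf, fun u hu => ?_, ?_⟩
    · rw [← G.mem_neighborFinset, hnbr]
      exact mem_union_right _ hu
    · rw [← G.card_neighborFinset_eq_degree, hnbr, hcard]

lemma neighborFinset_graphOf_eq_iff {ω : Sym2 (Fin n) → Bool} {v : Fin n} {S : Finset (Fin n)}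
    (hvS : v ∉ S) :
    (graphOf ω).neighborFinset v = S ↔ ∀ w, v ≠ w → (ω s(v, w) = true ↔ w ∈ S) := by
  simp only [Finset.ext_iff, SimpleGraph.mem_neighborFinset]
  constructor
  · intro h w hvw
    simpa [graphOf, hvw] using h w
  · intro h w
    by_cases hvw : v = w
    · subst hvw
      simp [hvS]
    · simpa [graphOf, hvw] using h w hvw

lemma isBStar_graphOf_iff {ℓ k : ℕ} {ω : Sym2 (Fin n) → Bool} {v : Fin n} {L K : Finset (Fin n)}
    (h : IsStarShape ℓ k v L K) :
    IsBStar ℓ k (graphOf ω) v L K ↔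
      ∀ e ∈ incidentEdges (insert v L), (ω e = true ↔ e ∈ starEdges v (L ∪ K)) := by
  have hvLK : v ∉ L ∪ K := notMem_union.2 ⟨h.2.2.2.1, h.2.2.2.2⟩
  rw [isBStar_iff_neighborFinset h, forall_mem_incidentEdges, forall_mem_insert,
    neighborFinset_graphOf_eq_iff hvLK]
  refine and_congr (forall₂_congr fun w _ => by rw [mk_mem_starEdges]) <|
    forall₂_congr fun u hu => ?_
  have huv : u ≠ v := fun h' => h.2.2.2.1 (h' ▸ hu)
  rw [neighborFinset_graphOf_eq_iff (notMem_singleton.2 huv)]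
  exact forall₂_congr fun w _ => by
    rw [mk_mem_starEdges_of_mem (mem_union_left _ hu) huv, mem_singleton]

def blockedEdges (v : Fin n) (L K : Finset (Fin n)) : Finset (Sym2 (Fin n)) :=
  incidentEdges (insert v L) \ starEdges v (L ∪ K)

lemma card_blockedEdges_le {ℓ : ℕ} {v : Fin n} {L : Finset (Fin n)} (K : Finset (Fin n))
    (hL : #L = ℓ) (hvL : v ∉ L) : #(blockedEdges v L K) ≤ (ℓ + 1) * n := by
  calc #(blockedEdges v L K) ≤ #(incidentEdges (insert v L)) := card_le_card sdiff_subset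
    _ ≤ #(insert v L) * Fintype.card (Fin n) := card_incidentEdges_le _
    _ = (ℓ + 1) * n := by rw [card_insert_of_notMem hvL, hL, Fintype.card_fin]

lemma le_card_blockedEdges_add {ℓ k : ℕ} {v : Fin n} {L K : Finset (Fin n)}
    (h : IsStarShape ℓ k v L K) :
    (ℓ + 1) * n ≤ #(blockedEdges v L K) + ((ℓ + 1) * (ℓ + 1) + (ℓ + k)) := by
  obtain ⟨hL, hK, hLK, hvL, hvK⟩ := h
  have hsub := starEdges_subset_incidentEdges (notMem_union.2 ⟨hvL, hvK⟩) (mem_insert_self v L)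
  have hlow := mul_card_compl_le_card_incidentEdges (insert v L)
  have hstar := card_le_card hsub
  rw [card_insert_of_notMem hvL, hL, Fintype.card_fin, Nat.mul_sub] at hlow
  rw [card_starEdges, card_union_of_disjoint hLK, hL, hK] at hstar
  rw [blockedEdges, card_sdiff_of_subset hsub, card_starEdges, card_union_of_disjoint hLK, hL, hK]
  omega

end StarShapes

section Expectation
variable {n : ℕ}

lemma bernoulli_toMeasure_real_singleton {p : ℝ} (hp0 : 0 ≤ p) (hp1 : p ≤ 1) (b : Bool) :
    (PMF.bernoulli (min p.toNNReal 1) (min_le_right _ _)).toMeasure.real {b} =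
      if b then p else 1 - p := by
  rw [measureReal_def, PMF.toMeasure_apply_singleton _ _ (measurableSet_singleton b),
    PMF.bernoulli_apply, min_eq_left (Real.toNNReal_le_one.2 hp1)]
  cases b <;> simp [hp0, hp1]

lemma gnp_real_cylinder {p : ℝ} (hp0 : 0 ≤ p) (hp1 : p ≤ 1) {A R : Finset (Sym2 (Fin n))}
    (hAR : A ⊆ R) :
    (gnp n p).real {ω | ∀ e ∈ R, (ω e = true ↔ e ∈ A)} = p ^ #A * (1 - p) ^ #(R \ A) := by
  classical
  have hset : {ω : Sym2 (Fin n) → Bool | ∀ e ∈ R, (ω e = true ↔ e ∈ A)} =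
      Set.univ.pi fun e => if e ∈ (R : Set (Sym2 (Fin n))) then {decide (e ∈ A)} else Set.univ := by
    rw [Set.univ_pi_ite]
    ext ω
    refine forall₂_congr fun e _ => ?_
    cases ω e <;> simp
  rw [hset, gnp, measureReal_def, Measure.pi_pi, ENNReal.toReal_prod]
  simp only [mem_coe, apply_ite, ← measureReal_def, bernoulli_toMeasure_real_singleton hp0 hp1,
    decide_eq_true_eq, probReal_univ]
  rw [prod_ite_mem, univ_inter, prod_ite, filter_mem_eq_inter, inter_eq_right.2 hAR,
    filter_notMem_eq_sdiff, prod_const, prod_const]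

lemma gnp_real_isBStar {p : ℝ} (hp0 : 0 ≤ p) (hp1 : p ≤ 1) {ℓ k : ℕ} {v : Fin n}
    {L K : Finset (Fin n)} (h : IsStarShape ℓ k v L K) :
    (gnp n p).real {ω | IsBStar ℓ k (graphOf ω) v L K} =
      p ^ (ℓ + k) * (1 - p) ^ #(blockedEdges v L K) := by
  obtain ⟨hL, hK, hLK, hvL, hvK⟩ := h
  have hsub := starEdges_subset_incidentEdges (notMem_union.2 ⟨hvL, hvK⟩) (mem_insert_self v L)
  simp_rw [isBStar_graphOf_iff ⟨hL, hK, hLK, hvL, hvK⟩]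
  rw [gnp_real_cylinder hp0 hp1 hsub, card_starEdges, card_union_of_disjoint hLK, hL, hK,
    blockedEdges]

lemma integral_card_filter {Ω ι : Type*} [MeasurableSpace Ω] [Fintype ι] (μ : Measure Ω)
    [IsFiniteMeasure μ] (P : ι → Ω → Prop) [∀ i ω, Decidable (P i ω)]
    (hP : ∀ i, MeasurableSet {ω | P i ω}) :
    ∫ ω, (#{i | P i ω} : ℝ) ∂μ = ∑ i, μ.real {ω | P i ω} := by
  have hind (i : ι) (ω : Ω) : (if P i ω then (1 : ℝ) else 0) = {ω | P i ω}.indicator 1 ω := by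
    simp [Set.indicator_apply]
  simp_rw [natCast_card_filter, hind]
  rw [integral_finsetSum _ fun i _ => (integrable_const 1).indicator (hP i)]
  exact sum_congr rfl fun i _ => integral_indicator_one (hP i)

lemma integral_bStarCount (ℓ k n : ℕ) {p : ℝ} (hp0 : 0 ≤ p) (hp1 : p ≤ 1) :
    ∫ ω, (bStarCount ℓ k ω : ℝ) ∂gnp n p =
      ∑ x ∈ starShapes ℓ k n, p ^ (ℓ + k) * (1 - p) ^ #(blockedEdges x.1 x.2.1 x.2.2) := by
  have : IsProbabilityMeasure (gnp n p) := by rw [gnp]; infer_instance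
  classical
  unfold bStarCount
  rw [integral_card_filter _ _ fun _ => MeasurableSet.of_discrete, starShapes, sum_filter]
  refine sum_congr rfl fun x _ => ?_
  split_ifs with h
  · exact gnp_real_isBStar hp0 hp1 h
  · convert measureReal_empty (μ := gnp n p)
    exact Set.eq_empty_of_forall_notMem fun ω hω => h (IsBStar.isStarShape hω)

lemma card_starShapes_mul_le_integral_bStarCount (ℓ k n : ℕ) {p : ℝ} (hp0 : 0 ≤ p)
    (hp1 : p ≤ 1) :
    #(starShapes ℓ k n) * (p ^ (ℓ + k) * (1 - p) ^ ((ℓ + 1) * n)) ≤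
      ∫ ω, (bStarCount ℓ k ω : ℝ) ∂gnp n p := by
  rw [integral_bStarCount ℓ k n hp0 hp1, ← nsmul_eq_mul]
  refine card_nsmul_le_sum _ _ _ fun x hx => mul_le_mul_of_nonneg_left ?_ (by positivity)
  have hx : IsStarShape ℓ k x.1 x.2.1 x.2.2 := (mem_filter.1 hx).2
  exact pow_le_pow_of_le_one (sub_nonneg.2 hp1) (by linarith)
    (card_blockedEdges_le _ hx.1 hx.2.2.2.1)

lemma integral_bStarCount_mul_le (ℓ k n : ℕ) {p : ℝ} (hp0 : 0 ≤ p) (hp1 : p ≤ 1) :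
    (∫ ω, (bStarCount ℓ k ω : ℝ) ∂gnp n p) * (1 - p) ^ ((ℓ + 1) * (ℓ + 1) + (ℓ + k)) ≤
      #(starShapes ℓ k n) * (p ^ (ℓ + k) * (1 - p) ^ ((ℓ + 1) * n)) := by
  rw [integral_bStarCount ℓ k n hp0 hp1, ← nsmul_eq_mul, sum_mul]
  refine sum_le_card_nsmul _ _ _ fun x hx => ?_
  rw [mul_assoc, ← pow_add]
  exact mul_le_mul_of_nonneg_left (pow_le_pow_of_le_one (sub_nonneg.2 hp1) (by linarith)
    (le_card_blockedEdges_add (mem_filter.1 hx).2)) (by positivity)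

end Expectation

section Asymptotics
open Real

lemma one_sub_mul_sq_le_one_sub_mul_exp_pow {x : ℝ} (h0 : 0 ≤ x) (h1 : x ≤ 1) (m : ℕ) :
    1 - m * x ^ 2 ≤ ((1 - x) * exp x) ^ m :=
  calc 1 - m * x ^ 2 = 1 + m * (-x ^ 2) := by ring
    _ ≤ (1 + -x ^ 2) ^ m := one_add_mul_le_pow (by nlinarith) m
    _ ≤ ((1 - x) * exp x) ^ m := by
      refine pow_le_pow_left₀ (by nlinarith) ?_ m
      calc 1 + -x ^ 2 = (1 - x) * (x + 1) := by ring
        _ ≤ (1 - x) * exp x := mul_le_mul_of_nonneg_left (add_one_le_exp x) (by linarith)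

lemma one_sub_mul_exp_pow_le_one {x : ℝ} (h1 : x ≤ 1) (m : ℕ) : ((1 - x) * exp x) ^ m ≤ 1 := by
  refine pow_le_one₀ (mul_nonneg (by linarith) (exp_nonneg x)) ?_
  calc (1 - x) * exp x ≤ exp (-x) * exp x := by gcongr; exact one_sub_le_exp_neg x
    _ = 1 := by rw [← exp_add, neg_add_cancel, exp_zero]

lemma tendsto_one_sub_mul_exp_pow {x : ℕ → ℝ} (h0 : ∀ᶠ n in atTop, 0 ≤ x n)
    (h1 : ∀ᶠ n in atTop, x n ≤ 1) (hx : Tendsto (fun n : ℕ => n * x n ^ 2) atTop (𝓝 0)) :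
    Tendsto (fun n : ℕ => ((1 - x n) * exp (x n)) ^ n) atTop (𝓝 1) := by
  have hlow : Tendsto (fun n : ℕ => 1 - n * x n ^ 2) atTop (𝓝 1) := by
    simpa using tendsto_const_nhds.sub hx
  refine tendsto_of_tendsto_of_tendsto_of_le_of_le' hlow tendsto_const_nhds ?_ ?_
  · filter_upwards [h0, h1] with n h0 h1 using one_sub_mul_sq_le_one_sub_mul_exp_pow h0 h1 n
  · filter_upwards [h1] with n h1 using one_sub_mul_exp_pow_le_one h1 n

lemma tendsto_descFactorial_div_pow (m : ℕ) :
    Tendsto (fun n : ℕ => (n.descFactorial m : ℝ) / n ^ m) atTop (𝓝 1) := by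
  have hlow : Tendsto (fun n : ℕ => (1 - m / (n : ℝ)) ^ m) atTop (𝓝 1) := by
    simpa using ((tendsto_const_nhds (x := (1 : ℝ))).sub
      (tendsto_const_div_atTop_nhds_zero_nat (m : ℝ))).pow m
  refine tendsto_of_tendsto_of_tendsto_of_le_of_le' hlow tendsto_const_nhds ?_ ?_
  · filter_upwards [eventually_ge_atTop m, eventually_gt_atTop 0] with n hmn hn
    have hn' : (0 : ℝ) < n := Nat.cast_pos.2 hn
    rw [one_sub_div hn'.ne', div_pow, div_le_div_iff_of_pos_right (by positivity)]
    calc ((n : ℝ) - m) ^ m ≤ ((n + 1 - m : ℕ) : ℝ) ^ m := by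
          gcongr
          · linarith [(Nat.cast_le (α := ℝ)).2 hmn]
          · rw [Nat.cast_sub (by omega)]; push_cast; linarith
      _ ≤ n.descFactorial m := by exact_mod_cast Nat.pow_sub_le_descFactorial n m
  · filter_upwards [eventually_gt_atTop 0] with n hn
    rw [div_le_one (by positivity)]
    exact_mod_cast Nat.descFactorial_le_pow n m

lemma tendsto_sq_div_of_le_mul_log {d : ℕ → ℝ} {c : ℝ} (hd0 : ∀ᶠ n in atTop, 0 ≤ d n)
    (hc : ∀ᶠ n in atTop, d n ≤ c * log n) :
    Tendsto (fun n : ℕ => d n ^ 2 / n) atTop (𝓝 0) := by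
  have hlog : Tendsto (fun n : ℕ => c ^ 2 * (log n ^ 2 / n)) atTop (𝓝 0) := by
    have := (tendsto_pow_log_div_mul_add_atTop 1 0 2 one_ne_zero).comp tendsto_natCast_atTop_atTop
    simpa using this.const_mul (c ^ 2)
  refine tendsto_of_tendsto_of_tendsto_of_le_of_le' tendsto_const_nhds hlog ?_ ?_
  · filter_upwards with n using by positivity
  · filter_upwards [hd0, hc] with n h0 hc
    rw [mul_div_assoc', ← mul_pow]
    gcongr

lemma tendsto_div_natCast_of_tendsto_sq_div {d : ℕ → ℝ} (hd1 : ∀ᶠ n in atTop, 1 ≤ d n)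
    (hd2 : Tendsto (fun n : ℕ => d n ^ 2 / n) atTop (𝓝 0)) :
    Tendsto (fun n : ℕ => d n / n) atTop (𝓝 0) := by
  refine tendsto_of_tendsto_of_tendsto_of_le_of_le' tendsto_const_nhds hd2 ?_ ?_
  · filter_upwards [hd1] with n h using by positivity
  · filter_upwards [hd1] with n h
    gcongr
    nlinarith

lemma card_starShapes_mul_div_eq (ℓ k : ℕ) {n : ℕ} (hn : n ≠ 0) {d : ℝ} (hd : d ≠ 0) :
    #(starShapes ℓ k n) * ((d / n) ^ (ℓ + k) * (1 - d / n) ^ ((ℓ + 1) * n)) /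
        (n * d ^ (ℓ + k) / ((ℓ ! : ℝ) * (k ! : ℝ)) * exp (-d * ((ℓ : ℝ) + 1))) =
      n.descFactorial (ℓ + k + 1) / (n : ℝ) ^ (ℓ + k + 1) *
        (((1 - d / n) * exp (d / n)) ^ n) ^ (ℓ + 1) := by
  have hn' : (n : ℝ) ≠ 0 := Nat.cast_ne_zero.2 hn
  have hexp : exp (-d * ((ℓ : ℝ) + 1)) = (exp (d / n) ^ (n * (ℓ + 1)))⁻¹ := by
    rw [← exp_nat_mul, ← exp_neg]
    push_cast
    field_simp
  rw [← card_starShapes_mul_factorial, ← pow_mul, mul_pow, hexp, div_pow]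
  generalize 1 - d / n = q
  generalize exp (d / n) = e
  push_cast
  field_simp
  ring

lemma tendsto_card_starShapes_mul_div (ℓ k : ℕ) {d : ℕ → ℝ} (hd1 : ∀ᶠ n in atTop, 1 ≤ d n)
    (hd2 : Tendsto (fun n : ℕ => d n ^ 2 / n) atTop (𝓝 0)) :
    Tendsto (fun n : ℕ =>
        #(starShapes ℓ k n) * ((d n / n) ^ (ℓ + k) * (1 - d n / n) ^ ((ℓ + 1) * n)) /
          (n * d n ^ (ℓ + k) / ((ℓ ! : ℝ) * (k ! : ℝ)) * exp (-(d n) * ((ℓ : ℝ) + 1))))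
      atTop (𝓝 1) := by
  have hp := tendsto_div_natCast_of_tendsto_sq_div hd1 hd2
  have hp0 : ∀ᶠ n : ℕ in atTop, 0 ≤ d n / n := by
    filter_upwards [hd1] with n h using by positivity
  have hp1 : ∀ᶠ n : ℕ in atTop, d n / n ≤ 1 := hp.eventually (eventually_le_nhds one_pos)
  have hx : Tendsto (fun n : ℕ => n * (d n / n) ^ 2) atTop (𝓝 0) := by
    refine hd2.congr fun n => ?_
    rcases eq_or_ne (n : ℝ) 0 with hn | hn
    · simp [hn]
    · field_simp
  have := (tendsto_descFactorial_div_pow (ℓ + k + 1)).mul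
    ((tendsto_one_sub_mul_exp_pow hp0 hp1 hx).pow (ℓ + 1))
  rw [one_pow, one_mul] at this
  refine this.congr' ?_
  filter_upwards [hd1, eventually_ne_atTop 0] with n h hn
  exact (card_starShapes_mul_div_eq ℓ k hn (by positivity)).symm

lemma tendsto_integral_bStarCount_div (ℓ k : ℕ) {d : ℕ → ℝ} (hd1 : ∀ᶠ n in atTop, 1 ≤ d n)
    (hd2 : Tendsto (fun n : ℕ => d n ^ 2 / n) atTop (𝓝 0)) :
    Tendsto (fun n : ℕ => (∫ ω, (bStarCount ℓ k ω : ℝ) ∂gnp n (d n / n)) /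
        (n * d n ^ (ℓ + k) / ((ℓ ! : ℝ) * (k ! : ℝ)) * exp (-(d n) * ((ℓ : ℝ) + 1))))
      atTop (𝓝 1) := by
  set T : ℕ → ℝ := fun n => n * d n ^ (ℓ + k) / ((ℓ ! : ℝ) * (k ! : ℝ)) *
    exp (-(d n) * ((ℓ : ℝ) + 1))
  have hp := tendsto_div_natCast_of_tendsto_sq_div hd1 hd2
  have hp0 : ∀ᶠ n : ℕ in atTop, 0 ≤ d n / n := by
    filter_upwards [hd1] with n h using by positivity
  have hp1 : ∀ᶠ n : ℕ in atTop, d n / n < 1 := hp.eventually (eventually_lt_nhds one_pos)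
  have hT : ∀ᶠ n : ℕ in atTop, 0 < T n := by
    filter_upwards [hd1, eventually_gt_atTop 0] with n h hn
    have : (0 : ℝ) < n := Nat.cast_pos.2 hn
    positivity
  have hlow := tendsto_card_starShapes_mul_div ℓ k hd1 hd2
  have hup := hlow.div ((tendsto_const_nhds.sub hp).pow ((ℓ + 1) * (ℓ + 1) + (ℓ + k)))
    (pow_ne_zero _ (by norm_num : (1 : ℝ) - 0 ≠ 0))
  rw [sub_zero, one_pow, div_one] at hup
  refine tendsto_of_tendsto_of_tendsto_of_le_of_le' hlow hup ?_ ?_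
  · filter_upwards [hp0, hp1, hT] with n h0 h1 hTn
    exact div_le_div_of_nonneg_right
      (card_starShapes_mul_le_integral_bStarCount ℓ k n h0 h1.le) hTn.le
  · filter_upwards [hp0, hp1, hT] with n h0 h1 hTn
    show _ / T n ≤ _ / T n / _
    rw [div_right_comm, div_le_div_iff_of_pos_right hTn, le_div_iff₀ (pow_pos (sub_pos.2 h1) _)]
    exact integral_bStarCount_mul_le ℓ k n h0 h1.le

end Asymptotics

/-- for `p = d/n` with `1 ≪ d = O(log n)`, the expected number of
`(ℓ,k)`-blocking stars in `G(n, d/n)` is asymptotic to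
`n · d^(ℓ+k) / (ℓ! k!) · e^(-d(ℓ+1))`. -/
theorem stmt16 (ℓ k : ℕ) (d : ℕ → ℝ)
    (hd : Filter.Tendsto d Filter.atTop Filter.atTop)
    (hO : ∃ c > (0 : ℝ), ∀ᶠ n in Filter.atTop, d n ≤ c * Real.log n) :
    Filter.Tendsto
      (fun n : ℕ =>
        (∫ ω, (bStarCount ℓ k ω : ℝ) ∂(gnp n (d n / n))) /
          ((n : ℝ) * d n ^ (ℓ + k) / ((Nat.factorial ℓ : ℝ) * (Nat.factorial k : ℝ)) *
            Real.exp (-(d n) * ((ℓ : ℝ) + 1))))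
      Filter.atTop (nhds 1) := by
  obtain ⟨c, -, hc⟩ := hO
  have hd1 : ∀ᶠ n in atTop, 1 ≤ d n := hd.eventually_ge_atTop 1
  exact tendsto_integral_bStarCount_div ℓ k hd1
    (tendsto_sq_div_of_le_mul_log (hd1.mono fun _ h => zero_le_one.trans h) hc)
end
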